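/- Let P be a Borel probability measure on ℝ^{k×m} such that for every S ⊆ {1,…,m} with P[colsupp(W) = S] > 0 and every nonzero a ∈ ℝ^m with supp(a) ⊆ S, P[{W : W a = 0} ∩ {colsupp(W) = S}] = 0. Let L ∈ ℝ^{m×m} and set N_j := {i ∈ {1,…,m} : L_{ij} ≠ 0} for each j. Then ∫ ‖W L‖_{2,0} dP(W) = Σ_{j=1}^m P[colsupp(W) ∩ N_j ≠ ∅]; in particular (taking L = I), ∫ ‖W‖_{2,0} dP(W) = Σ_{j=1}^m P[j ∈ colsupp(W)]. -/

import Mathlib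

open MeasureTheory
open scoped ENNReal BigOperators

/-- Matrices over `ℝ` carry the Borel σ-algebra of their (product) topology. -/
noncomputable instance matrixMeasurableSpace {k m : ℕ} :
    MeasurableSpace (Matrix (Fin k) (Fin m) ℝ) := borel _

instance matrixBorelSpace {k m : ℕ} : BorelSpace (Matrix (Fin k) (Fin m) ℝ) := ⟨rfl⟩

/-- The column support of a matrix: indices of its nonzero columns. -/
def colSupp {k m : ℕ} (W : Matrix (Fin k) (Fin m) ℝ) : Set (Fin m) :=
  {j | ∃ i, W i j ≠ 0}

/-- The column sparsity `‖A‖_{2,0}`: the number of nonzero columns. -/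
noncomputable def colSparsity {k m : ℕ} (W : Matrix (Fin k) (Fin m) ℝ) : ℕ :=
  (colSupp W).ncard

/-! Since `‖W L‖_{2,0} = ∑ⱼ 1[j ∈ colsupp (W L)]`, its integral is `∑ⱼ P[j ∈ colsupp (W L)]`.
If column `j` of `W L` is nonzero then `colsupp W` meets `N j`. Conversely, on the event
`colsupp W = S` with `S ∩ N j ≠ ∅`, column `j` of `W L` equals `W a` for the restriction `a` of
`L_{:j}` to `S`, a nonzero vector supported in `S`; by assumption `W a = 0` is null there. As there
are finitely many `S`, the two events differ by a null set. -/

variable {k m n : ℕ}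

lemma isOpen_setOf_mem_colSupp (j : Fin m) :
    IsOpen {W : Matrix (Fin k) (Fin m) ℝ | j ∈ colSupp W} := by
  change IsOpen {W : Matrix (Fin k) (Fin m) ℝ | ∃ i, W i j ≠ 0}
  rw [Set.ofPred_exists]
  exact isOpen_iUnion fun i => isOpen_ne_fun (by fun_prop) continuous_const

lemma colSparsity_eq_sum_indicator (W : Matrix (Fin k) (Fin m) ℝ) :
    (colSparsity W : ℝ≥0∞) = ∑ j : Fin m, (colSupp W).indicator 1 j := by
  classical
  simp [colSparsity, Set.ncard_eq_toFinset_card', Set.indicator_apply, Finset.sum_boole]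

lemma lintegral_colSparsity_comp {α : Type*} [MeasurableSpace α] (μ : Measure α)
    {f : α → Matrix (Fin k) (Fin m) ℝ} (hf : Measurable f) :
    ∫⁻ a, (colSparsity (f a) : ℝ≥0∞) ∂μ = ∑ j : Fin m, μ {a | j ∈ colSupp (f a)} := by
  have hmeas (j : Fin m) : MeasurableSet {a | j ∈ colSupp (f a)} :=
    hf (isOpen_setOf_mem_colSupp j).measurableSet
  have hind (a : α) (j : Fin m) :
      (colSupp (f a)).indicator 1 j = {a | j ∈ colSupp (f a)}.indicator (1 : α → ℝ≥0∞) a :=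
    rfl
  simp_rw [colSparsity_eq_sum_indicator, hind]
  rw [lintegral_finsetSum _ fun j _ => measurable_one.indicator (hmeas j)]
  exact Finset.sum_congr rfl fun j _ => lintegral_indicator_one (hmeas j)

lemma colSupp_inter_nonempty_of_mem_colSupp_mul {W : Matrix (Fin k) (Fin m) ℝ}
    {L : Matrix (Fin m) (Fin n) ℝ} {j : Fin n} (hj : j ∈ colSupp (W * L)) :
    (colSupp W ∩ {i | L i j ≠ 0}).Nonempty := by
  obtain ⟨i, hi⟩ := hj
  rw [Matrix.mul_apply] at hi
  obtain ⟨l, -, hl⟩ := Finset.exists_ne_zero_of_sum_ne_zero hi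
  exact ⟨l, ⟨i, left_ne_zero_of_mul hl⟩, right_ne_zero_of_mul hl⟩

lemma mulVec_indicator_of_colSupp_subset {W : Matrix (Fin k) (Fin m) ℝ} {S : Set (Fin m)}
    (hW : colSupp W ⊆ S) (v : Fin m → ℝ) : W.mulVec (S.indicator v) = W.mulVec v := by
  funext i
  simp only [Matrix.mulVec, dotProduct]
  refine Finset.sum_congr rfl fun l _ => ?_
  by_cases hl : l ∈ S
  · rw [Set.indicator_of_mem hl]
  · have : W i l = 0 := by_contra fun h => hl (hW ⟨i, h⟩)
    simp [this]

def IntraSupportVariability (P : Measure (Matrix (Fin k) (Fin m) ℝ)) : Prop :=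
  ∀ S : Set (Fin m), 0 < P {W | colSupp W = S} →
    ∀ a : Fin m → ℝ, a ≠ 0 → {j | a j ≠ 0} ⊆ S →
      P ({W | W.mulVec a = 0} ∩ {W | colSupp W = S}) = 0

namespace IntraSupportVariability

variable {P : Measure (Matrix (Fin k) (Fin m) ℝ)}

lemma measure_mulVec_eq_zero_inter_colSupp_eq (hP : IntraSupportVariability P)
    {S : Set (Fin m)} {a : Fin m → ℝ} (ha : a ≠ 0) (haS : {j | a j ≠ 0} ⊆ S) :
    P ({W | W.mulVec a = 0} ∩ {W | colSupp W = S}) = 0 := by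
  rcases eq_or_ne (P {W | colSupp W = S}) 0 with hzero | hpos
  · exact measure_mono_null Set.inter_subset_right hzero
  · exact hP S hpos.bot_lt a ha haS

lemma measure_setOf_mem_colSupp_mul (hP : IntraSupportVariability P)
    (L : Matrix (Fin m) (Fin n) ℝ) (j : Fin n) :
    P {W | j ∈ colSupp (W * L)} = P {W | (colSupp W ∩ {i | L i j ≠ 0}).Nonempty} := by
  set N := {i | L i j ≠ 0}
  set col : Fin m → ℝ := fun l => L l j
  refine measure_eq_measure_of_null_sdiff
    (fun W hW => colSupp_inter_nonempty_of_mem_colSupp_mul hW) ?_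
  have hcover : {W : Matrix (Fin k) (Fin m) ℝ | (colSupp W ∩ N).Nonempty} \
      {W | j ∈ colSupp (W * L)} ⊆
      ⋃ S ∈ {S : Set (Fin m) | (S ∩ N).Nonempty},
        {W | W.mulVec (S.indicator col) = 0} ∩ {W | colSupp W = S} := by
    rintro W ⟨hWN, hWL⟩
    refine Set.mem_biUnion hWN ⟨?_, rfl⟩
    rw [Set.mem_ofPred_eq, mulVec_indicator_of_colSupp_subset subset_rfl]
    funext i
    exact by_contra fun h => hWL ⟨i, h⟩
  refine measure_mono_null hcover ((measure_biUnion_null_iff (Set.to_countable _)).2 ?_)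
  rintro S ⟨l, hlS, hlN⟩
  refine hP.measure_mulVec_eq_zero_inter_colSupp_eq (fun h => hlN ?_) Set.support_indicator_subset
  simpa [col, Set.indicator_of_mem hlS] using congrFun h l

end IntraSupportVariability

theorem expected_colSparsity_mul_general {k m : ℕ}
    (P : Measure (Matrix (Fin k) (Fin m) ℝ))
    (hA6 : ∀ S : Set (Fin m), 0 < P {W | colSupp W = S} →
      ∀ a : Fin m → ℝ, a ≠ 0 → {j | a j ≠ 0} ⊆ S →
        P ({W | W.mulVec a = 0} ∩ {W | colSupp W = S}) = 0)
    (L : Matrix (Fin m) (Fin m) ℝ)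
    (N : Fin m → Set (Fin m)) (hN : ∀ j, N j = {i | L i j ≠ 0}) :
    (∫⁻ W, (colSparsity (W * L) : ℝ≥0∞) ∂P) =
        ∑ j : Fin m, P {W | colSupp W ∩ N j ≠ ∅} ∧
    (∫⁻ W, (colSparsity W : ℝ≥0∞) ∂P) =
        ∑ j : Fin m, P {W | j ∈ colSupp W} := by
  have hP : IntraSupportVariability P := hA6
  refine ⟨?_, lintegral_colSparsity_comp P measurable_id⟩
  rw [lintegral_colSparsity_comp P (f := (· * L))
    (continuous_id.matrix_mul continuous_const).measurable]
  refine Finset.sum_congr rfl fun j _ => ?_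
  simp only [hP.measure_setOf_mem_colSupp_mul L j, hN, ← Set.nonempty_iff_ne_empty]

/-- **Expected column sparsity after right multiplication.**
If `P` is a Borel probability measure on `ℝ^{k×m}` satisfying the intra-support
sufficient task variability assumption, and `N j` is the support of the `j`-th column
of `L`, then `∫ ‖W L‖_{2,0} dP(W) = ∑ⱼ P[colsupp W ∩ N j ≠ ∅]`; in particular (the case
`L = I`), `∫ ‖W‖_{2,0} dP(W) = ∑ⱼ P[j ∈ colsupp W]`. -/
theorem expected_colSparsity_mul {k m : ℕ}
    (P : Measure (Matrix (Fin k) (Fin m) ℝ)) [IsProbabilityMeasure P]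
    (hA6 : ∀ S : Set (Fin m), 0 < P {W | colSupp W = S} →
      ∀ a : Fin m → ℝ, a ≠ 0 → {j | a j ≠ 0} ⊆ S →
        P ({W | W.mulVec a = 0} ∩ {W | colSupp W = S}) = 0)
    (L : Matrix (Fin m) (Fin m) ℝ)
    (N : Fin m → Set (Fin m)) (hN : ∀ j, N j = {i | L i j ≠ 0}) :
    (∫⁻ W, (colSparsity (W * L) : ℝ≥0∞) ∂P) =
        ∑ j : Fin m, P {W | colSupp W ∩ N j ≠ ∅} ∧
    (∫⁻ W, (colSparsity W : ℝ≥0∞) ∂P) =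
        ∑ j : Fin m, P {W | j ∈ colSupp W} :=
  expected_colSparsity_mul_general P hA6 L N hN
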